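/- Order colleges so that κ1 ≤ κ2 ≤ ... are their capacities in increasing order and let Σ(k) = κ1 + ... + κk. In the common-priority model, any student whose priority rank is at most Σ(T) is never rejected more than T − 1 times during the straightforward-strategy application process, and hence her TCDM outcome with round limit T equals her DA outcome. -/

import Mathlib

/-!
A student `b` is rejected in round `t + 1` only from a college `c` that is filled by students of
higher priority than `b`. Since `b` applied to `c`, it was not yet filled above her in round `t`,
so some student `b' < b` must have been rejected in round `t`. Colleges filled above `b'` stay
filled above `b` in later rounds, so by induction a rejection in round `t + 1` exhibits `t + 1`
distinct colleges filled above `b`: their capacities, at least `Σ(t + 1)`, are at most `b`.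
Hence a student of rank at most `Σ(T)` is never rejected from round `T` on. For these students,
the tentative matching of round `T` satisfies the serial dictatorship recursion (each holds her
favourite option among those not filled above her), and so does every stable matching; the
recursion determines the assignment of each student from those of higher priority.
-/

open Finset
open scoped Classical

/-- A common-priority college admissions market: `n` students (index `0` is the
highest priority / highest score), `m` colleges with capacities `q`, and for each
student an injective ranking of the options in `Option (Fin m)` (`none` = being
unassigned / matched to oneself); a lower rank means more preferred. -/
structure Market (n m : ℕ) where
  q : Fin m → ℕ
  rank : Fin n → Option (Fin m) → ℕ
  rank_inj : ∀ i, Function.Injective (rank i)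

namespace Market

variable {n m : ℕ}

/-- `i` strictly prefers option `a` to option `b`. -/
def Prefers (M : Market n m) (i : Fin n) (a b : Option (Fin m)) : Prop :=
  M.rank i a < M.rank i b

/-- A matching: each student gets a college or `none`, capacities respected. -/
def IsMatching (M : Market n m) (μ : Fin n → Option (Fin m)) : Prop :=
  ∀ c : Fin m, (univ.filter fun i => μ i = some c).card ≤ M.q c

/-- Individual rationality. -/
def IR (M : Market n m) (μ : Fin n → Option (Fin m)) : Prop :=
  ∀ i c, μ i = some c → M.Prefers i (some c) none

/-- `(i, c)` blocks `μ`: `i` prefers `c` to her assignment and `c` has a free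
seat or holds a student of strictly lower priority. -/
def Blocks (M : Market n m) (μ : Fin n → Option (Fin m)) (i : Fin n) (c : Fin m) : Prop :=
  M.Prefers i (some c) (μ i) ∧
    ((univ.filter fun j => μ j = some c).card < M.q c ∨ ∃ j, μ j = some c ∧ i < j)

/-- Stability: a matching, individually rational, with no blocking pair. -/
def Stable (M : Market n m) (μ : Fin n → Option (Fin m)) : Prop :=
  M.IsMatching μ ∧ M.IR μ ∧ ∀ i c, ¬ M.Blocks μ i c

/-- Given an application profile, student `i` is tentatively held: she applies to
some college `c` and fewer than `q c` higher-priority students apply to `c`. -/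
def Held (M : Market n m) (app : Fin n → Option (Fin m)) (i : Fin n) : Prop :=
  ∃ c, app i = some c ∧ (univ.filter fun j => app j = some c ∧ j < i).card < M.q c

/-- The tentative matching induced by an application profile. -/
noncomputable def tentative (M : Market n m) (app : Fin n → Option (Fin m)) (i : Fin n) :
    Option (Fin m) :=
  if M.Held app i then app i else none

/-- `i` meets the current cutoff of `c`: `c` has a free seat in the tentative
matching, or tentatively holds a student of lower priority than `i`. -/
def Feasible (M : Market n m) (app : Fin n → Option (Fin m)) (i : Fin n) (c : Fin m) : Prop :=
  (univ.filter fun j => M.tentative app j = some c).card < M.q c ∨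
    ∃ j, M.tentative app j = some c ∧ i < j

/-- The option `o` is available to `i`: `none` always is, a college iff `i`
meets its cutoff. -/
def FeasibleOpt (M : Market n m) (app : Fin n → Option (Fin m)) (i : Fin n)
    (o : Option (Fin m)) : Prop :=
  o = none ∨ ∃ c, o = some c ∧ M.Feasible app i c

/-- One round of simultaneous straightforward revision: students who are not
rejected keep their application; every rejected student applies to her most
preferred option among those whose cutoff she meets. -/
def Step (M : Market n m) (app app' : Fin n → Option (Fin m)) : Prop :=
  ∀ i,
    (M.tentative app i = app i → app' i = app i) ∧
    (M.tentative app i ≠ app i →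
      M.FeasibleOpt app i (app' i) ∧
        ∀ o, M.FeasibleOpt app i o → M.rank i (app' i) ≤ M.rank i o)

/-- A run of the TCDM under straightforward strategies: `app t` is the profile of
applications in round `t + 1`; in round one every student applies to her most
preferred option, and each later round is a straightforward revision.  The
outcome of the TCDM with round limit `T ≥ 1` is `M.tentative (app (T - 1))`. -/
def IsRun (M : Market n m) (app : ℕ → Fin n → Option (Fin m)) : Prop :=
  (∀ i o, M.rank i (app 0 i) ≤ M.rank i o) ∧ ∀ t, M.Step (app t) (app (t + 1))

/-- Admission cutoff of college `c` (student `i` has score `n - i`): the lowest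
score among tentatively held students if `c` is at capacity, `0` otherwise. -/
noncomputable def cutoff (M : Market n m) (app : Fin n → Option (Fin m)) (c : Fin m) : ℕ :=
  if h : M.q c ≤ (univ.filter fun j => M.tentative app j = some c).card ∧
      (univ.filter fun j => M.tentative app j = some c).Nonempty then
    n - ((univ.filter fun j => M.tentative app j = some c).max' h.2 : ℕ)
  else 0

/-- Serial dictatorship outcome: in priority order each student receives her most
preferred option among `none` and the colleges not yet filled by
higher-priority students. -/
def IsSerialDictatorship (M : Market n m) (μ : Fin n → Option (Fin m)) : Prop :=
  ∀ i,
    (μ i = none ∨ ∃ c, μ i = some c ∧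
        (univ.filter fun j => j < i ∧ μ j = some c).card < M.q c) ∧
    ∀ o, (o = none ∨ ∃ c, o = some c ∧
        (univ.filter fun j => j < i ∧ μ j = some c).card < M.q c) →
      M.rank i (μ i) ≤ M.rank i o

end Market

/-- The market induced by capacities `q` and a profile `P` of strict preferences
over colleges (every college acceptable, `none` ranked last), where the
preference order of student `i` ranks college `c` in position `P i c`. -/
noncomputable def mkMarket {n m : ℕ} (q : Fin m → ℕ) (P : Fin n → Equiv.Perm (Fin m)) :
    Market n m where
  q := q
  rank := fun i o => o.elim m fun c => (P i c : ℕ)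
  rank_inj := by
    intro i a b h
    match a, b with
    | none, none => rfl
    | none, some c =>
      simp only [Option.elim] at h
      exact absurd h.symm (Nat.ne_of_lt (P i c).isLt)
    | some c, none =>
      simp only [Option.elim] at h
      exact absurd h (Nat.ne_of_lt (P i c).isLt)
    | some c, some d =>
      simp only [Option.elim] at h
      exact congrArg some ((P i).injective (Fin.val_injective h))

theorem Finset.card_filter_card_filter_lt_lt {α : Type*} [LinearOrder α] (A : Finset α) (q : ℕ) :
    #{x ∈ A | #{y ∈ A | y < x} < q} = min #A q := by
  induction A using Finset.induction_on_max with
  | empty => simp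
  | insert a s ha ih =>
    have has : a ∉ s := fun h => lt_irrefl a (ha a h)
    have htop : {y ∈ insert a s | y < a} = s := by
      rw [filter_insert, if_neg (lt_irrefl a), filter_true_of_mem ha]
    have hbelow : {x ∈ s | #{y ∈ insert a s | y < x} < q} = {x ∈ s | #{y ∈ s | y < x} < q} :=
      filter_congr fun x hx => by rw [filter_insert, if_neg (not_lt.2 (ha x hx).le)]
    rw [filter_insert, htop, hbelow, card_insert_of_notMem has]
    split_ifs with h
    · rw [card_insert_of_notMem (fun hm => has (mem_filter.1 hm).1), ih]
      omega
    · omega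

theorem Fin.sum_ite_val_lt_le_sum_of_monotone {m k : ℕ} {κ : Fin m → ℕ} (hκ : Monotone κ)
    {S : Finset (Fin m)} (hk : k ≤ #S) :
    (∑ l : Fin m, if (l : ℕ) < k then κ l else 0) ≤ ∑ l ∈ S, κ l := by
  calc (∑ l : Fin m, if (l : ℕ) < k then κ l else 0)
      ≤ ∑ l : Fin m, if (l : ℕ) < #S then κ l else 0 := sum_le_sum fun l _ => by split_ifs <;> omega
    _ ≤ ∑ l ∈ S, κ l := ?_
  clear hk
  induction S using Finset.induction_on_max with
  | empty => simp
  | insert a s ha ih =>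
    have has : a ∉ s := fun h => lt_irrefl a (ha a h)
    have hcard_le : #s ≤ a := by
      simpa using card_le_card (fun x hx => mem_Iio.2 (ha x hx) : s ⊆ Iio a)
    have hcard_lt : #s < m := hcard_le.trans_lt a.isLt
    have hsplit : ∀ l : Fin m, (if (l : ℕ) < #s + 1 then κ l else 0) =
        (if (l : ℕ) < #s then κ l else 0) + if l = ⟨#s, hcard_lt⟩ then κ l else 0 := by
      intro l
      split_ifs <;> simp_all [Fin.ext_iff] <;> omega
    have hκa : κ ⟨#s, hcard_lt⟩ ≤ κ a := hκ (Fin.le_def.2 hcard_le)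
    rw [card_insert_of_notMem has, sum_insert has, add_comm (κ a)]
    simp only [hsplit, sum_add_distrib, sum_ite_eq', mem_univ, if_true]
    exact add_le_add ih hκa

namespace Market

variable {n m : ℕ} (M : Market n m)

def FilledAbove (μ : Fin n → Option (Fin m)) (b : Fin n) (c : Fin m) : Prop :=
  M.q c ≤ #{j | j < b ∧ μ j = some c}

def Available (μ : Fin n → Option (Fin m)) (b : Fin n) (o : Option (Fin m)) : Prop :=
  o = none ∨ ∃ c, o = some c ∧ #{j | j < b ∧ μ j = some c} < M.q c

/-- `M.IsSerialDictatorship μ` unfolds to `∀ b, M.IsSerialDictatorshipAt μ b`. -/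
def IsSerialDictatorshipAt (μ : Fin n → Option (Fin m)) (b : Fin n) : Prop :=
  M.Available μ b (μ b) ∧ ∀ o, M.Available μ b o → M.rank b (μ b) ≤ M.rank b o

theorem available_some_iff {μ : Fin n → Option (Fin m)} {b : Fin n} {c : Fin m} :
    M.Available μ b (some c) ↔ ¬ M.FilledAbove μ b c := by
  simp [Available, FilledAbove]

variable {M}

theorem FilledAbove.mono {μ : Fin n → Option (Fin m)} {b b' : Fin n} {c : Fin m} (hbb : b ≤ b')
    (h : M.FilledAbove μ b c) : M.FilledAbove μ b' c :=
  h.trans (card_le_card (monotone_filter_right _ fun _ _ hj => ⟨hj.1.trans_le hbb, hj.2⟩))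

theorem sum_q_le_of_filledAbove {μ : Fin n → Option (Fin m)} {b : Fin n} {S : Finset (Fin m)}
    (h : ∀ c ∈ S, M.FilledAbove μ b c) : ∑ c ∈ S, M.q c ≤ b :=
  calc ∑ c ∈ S, M.q c
      ≤ ∑ c ∈ S, #{j ∈ Iio b | μ j = some c} :=
        sum_le_sum fun c hc => (h c hc).trans_eq (by congr 1; ext; simp)
    _ = ∑ o ∈ S.image some, #{j ∈ Iio b | μ j = o} := by
        rw [sum_image fun _ _ _ _ h => Option.some_injective _ h]
    _ = #{j ∈ Iio b | μ j ∈ S.image some} := sum_card_fiberwise_eq_card_filter _ _ _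
    _ ≤ #(Iio b) := card_filter_le _ _
    _ = b := Fin.card_Iio b

theorem card_filter_lt_lt_card_filter {μ : Fin n → Option (Fin m)} {b j : Fin n} {c : Fin m}
    (hj : μ j = some c) (hbj : b ≤ j) :
    #{j' | j' < b ∧ μ j' = some c} < #{j' | μ j' = some c} := by
  refine card_lt_card ((ssubset_iff_of_subset (monotone_filter_right _ fun _ _ h => h.2)).2 ⟨j, ?_⟩)
  simp [hj, hbj]

theorem free_or_holds_lower_iff {μ : Fin n → Option (Fin m)} (hμ : M.IsMatching μ) {b : Fin n}
    {c : Fin m} (hb : μ b ≠ some c) :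
    (#{j | μ j = some c} < M.q c ∨ ∃ j, μ j = some c ∧ b < j) ↔
      #{j | j < b ∧ μ j = some c} < M.q c := by
  constructor
  · rintro (hfree | ⟨j, hj, hbj⟩)
    · exact (card_le_card (monotone_filter_right _ fun _ _ h => h.2)).trans_lt hfree
    · exact (card_filter_lt_lt_card_filter hj hbj.le).trans_le (hμ c)
  · intro h
    by_contra! hfull
    refine (h.trans_le hfull.1).not_ge (card_le_card fun j hj => ?_)
    have hjc : μ j = some c := (mem_filter.1 hj).2
    have hjb : j ≠ b := by rintro rfl; exact hb hjc
    simpa [hjc] using lt_of_le_of_ne (hfull.2 j hjc) hjb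

theorem Stable.isSerialDictatorship {μ : Fin n → Option (Fin m)} (hs : M.Stable μ) :
    M.IsSerialDictatorship μ := by
  obtain ⟨hmatch, hIR, hblock⟩ := hs
  intro b
  refine ⟨?_, fun o ho => ?_⟩
  · cases hb : μ b with
    | none => exact Or.inl rfl
    | some c => exact Or.inr ⟨c, rfl, (card_filter_lt_lt_card_filter hb le_rfl).trans_le (hmatch c)⟩
  · by_contra! hlt
    rcases ho with rfl | ⟨c, rfl, hc⟩
    · cases hb : μ b with
      | none => rw [hb] at hlt; exact lt_irrefl _ hlt
      | some c => rw [hb] at hlt; exact lt_asymm hlt (hIR b c hb)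
    · have hne : μ b ≠ some c := fun h => by rw [h] at hlt; exact lt_irrefl _ hlt
      exact hblock b c ⟨hlt, (free_or_holds_lower_iff hmatch hne).2 hc⟩

theorem eq_of_forall_le_isSerialDictatorshipAt {μ ν : Fin n → Option (Fin m)} {i : Fin n}
    (h : ∀ b ≤ i, M.IsSerialDictatorshipAt μ b ∧ M.IsSerialDictatorshipAt ν b) : μ i = ν i := by
  induction i using WellFoundedLT.induction with
  | _ i ih =>
  have hbelow : ∀ j < i, μ j = ν j := fun j hj => ih j hj fun b hb => h b (hb.trans hj.le)
  have hcount : ∀ c, #{j | j < i ∧ μ j = some c} = #{j | j < i ∧ ν j = some c} := fun c =>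
    congrArg card (filter_congr fun j _ => and_congr_right fun hj => by rw [hbelow j hj])
  have havail : ∀ o, M.Available μ i o ↔ M.Available ν i o := by
    simp only [Available, hcount, implies_true]
  obtain ⟨⟨hμa, hμo⟩, hνa, hνo⟩ := h i le_rfl
  exact M.rank_inj i (le_antisymm (hμo _ ((havail _).2 hνa)) (hνo _ ((havail _).1 hμa)))

section Tentative

variable (M) (app : Fin n → Option (Fin m))

theorem tentative_eq_some_iff {j : Fin n} {c : Fin m} :
    M.tentative app j = some c ↔ app j = some c ∧ #{j' | app j' = some c ∧ j' < j} < M.q c := by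
  unfold tentative
  split_ifs with h
  · obtain ⟨c', hc', hcount⟩ := h
    refine ⟨fun h' => ⟨h', ?_⟩, And.left⟩
    obtain rfl := Option.some_inj.1 (hc'.symm.trans h')
    exact hcount
  · simp only [false_iff]
    exact fun h' => h ⟨c, h'⟩

variable {M app}

theorem app_eq_of_tentative_eq_some {j : Fin n} {c : Fin m} (h : M.tentative app j = some c) :
    app j = some c :=
  ((M.tentative_eq_some_iff app).1 h).1

theorem tentative_eq_none_of_ne {b : Fin n} (h : M.tentative app b ≠ app b) :
    M.tentative app b = none := by
  unfold tentative at *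
  split_ifs at * with hb
  · exact absurd rfl h
  · rfl

variable (M app)

theorem isMatching_tentative : M.IsMatching (M.tentative app) := fun c => by
  have : #{j | M.tentative app j = some c} =
      #{x ∈ {j | app j = some c} | #{y ∈ {j | app j = some c} | y < x} < M.q c} := by
    congr 1
    ext j
    simp [tentative_eq_some_iff, filter_filter]
  rw [this, card_filter_card_filter_lt_lt]
  exact min_le_right _ _

theorem card_filter_lt_tentative (b : Fin n) (c : Fin m) :
    #{j | j < b ∧ M.tentative app j = some c} = min #{j | app j = some c ∧ j < b} (M.q c) := by
  have hbelow : ∀ j < b,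
      #{y | (app y = some c ∧ y < b) ∧ y < j} = #{y | app y = some c ∧ y < j} := fun j hjb =>
    congrArg card (filter_congr fun y _ =>
      ⟨fun h => ⟨h.1.1, h.2⟩, fun h => ⟨⟨h.1, h.2.trans hjb⟩, h.2⟩⟩)
  rw [← card_filter_card_filter_lt_lt]
  congr 1
  ext j
  simp only [mem_filter, mem_univ, true_and, tentative_eq_some_iff, filter_filter]
  constructor
  · rintro ⟨hjb, hj, hcount⟩
    exact ⟨⟨hj, hjb⟩, (hbelow j hjb).trans_lt hcount⟩
  · rintro ⟨⟨hj, hjb⟩, hcount⟩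
    exact ⟨hjb, hj, (hbelow j hjb).symm.trans_lt hcount⟩

theorem available_tentative (b : Fin n) : M.Available (M.tentative app) b (M.tentative app b) := by
  cases h : M.tentative app b with
  | none => exact Or.inl rfl
  | some c =>
    refine Or.inr ⟨c, rfl, ?_⟩
    rw [card_filter_lt_tentative]
    exact (min_le_left _ _).trans_lt ((M.tentative_eq_some_iff app).1 h).2

variable {M app}

theorem filledAbove_of_rejected {b : Fin n} (h : M.tentative app b ≠ app b) :
    ∃ c, app b = some c ∧ M.FilledAbove (M.tentative app) b c := by
  cases hb : app b with
  | none => exact absurd ((tentative_eq_none_of_ne h).trans hb.symm) h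
  | some c =>
    refine ⟨c, rfl, ?_⟩
    have hfull : M.q c ≤ #{j | app j = some c ∧ j < b} := by
      by_contra! hlt
      exact h (by rw [hb, M.tentative_eq_some_iff]; exact ⟨hb, hlt⟩)
    rw [FilledAbove, card_filter_lt_tentative, min_eq_right hfull]

theorem feasibleOpt_iff_available {b : Fin n} (h : M.tentative app b = none)
    {o : Option (Fin m)} : M.FeasibleOpt app b o ↔ M.Available (M.tentative app) b o :=
  or_congr_right <| exists_congr fun _ => and_congr_right fun _ =>
    free_or_holds_lower_iff (M.isMatching_tentative app) (by simp [h])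

end Tentative

namespace Step

variable {app app' : Fin n → Option (Fin m)} (hs : M.Step app app')
include hs

theorem app_eq_of_tentative_eq_some {j : Fin n} {c : Fin m} (h : M.tentative app j = some c) :
    app' j = some c := by
  rw [(hs j).1 (h.trans (Market.app_eq_of_tentative_eq_some h).symm),
    Market.app_eq_of_tentative_eq_some h]

theorem filledAbove {b : Fin n} {c : Fin m} (h : M.FilledAbove (M.tentative app) b c) :
    M.FilledAbove (M.tentative app') b c := by
  rw [FilledAbove, card_filter_lt_tentative]
  refine le_min (h.trans (card_le_card fun j hj => ?_)) le_rfl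
  simp only [mem_filter, mem_univ, true_and] at hj ⊢
  exact ⟨hs.app_eq_of_tentative_eq_some hj.2, hj.1⟩

theorem available_of_available {b : Fin n} {o : Option (Fin m)}
    (h : M.Available (M.tentative app') b o) : M.Available (M.tentative app) b o := by
  rcases o with _ | c
  · exact Or.inl rfl
  · rw [available_some_iff] at h ⊢
    exact fun hfull => h (hs.filledAbove hfull)

theorem not_filledAbove {b : Fin n} {c : Fin m} (h : app' b = some c) :
    ¬ M.FilledAbove (M.tentative app) b c := by
  rw [← available_some_iff, ← h]
  by_cases hrej : M.tentative app b = app b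
  · rw [(hs b).1 hrej, ← hrej]
    exact M.available_tentative app b
  · exact (feasibleOpt_iff_available (tentative_eq_none_of_ne hrej)).1 ((hs b).2 hrej).1

theorem exists_lt_rejected {b : Fin n} (h : M.tentative app' b ≠ app' b) :
    ∃ b' < b, M.tentative app b' ≠ app b' := by
  obtain ⟨c, hc, hfull⟩ := filledAbove_of_rejected h
  by_contra! hkeep
  refine hs.not_filledAbove hc (hfull.trans (card_le_card fun j hj => ?_))
  simp only [mem_filter, mem_univ, true_and] at hj ⊢
  refine ⟨hj.1, ?_⟩
  rw [hkeep j hj.1, ← (hs j).1 (hkeep j hj.1)]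
  exact Market.app_eq_of_tentative_eq_some hj.2

end Step

end Market

namespace Market.IsRun

variable {n m : ℕ} {M : Market n m} {app : ℕ → Fin n → Option (Fin m)} (hrun : M.IsRun app)
include hrun

theorem rank_app_le {b : Fin n} {o : Option (Fin m)} :
    ∀ t, M.Available (M.tentative (app t)) b o → M.rank b (app t b) ≤ M.rank b o
  | 0, _ => hrun.1 b o
  | t + 1, ho => by
    have ho' := (hrun.2 t).available_of_available ho
    by_cases hrej : M.tentative (app t) b = app t b
    · rw [((hrun.2 t) b).1 hrej]
      exact rank_app_le t ho'
    · exact ((hrun.2 t) b).2 hrej |>.2 o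
        ((feasibleOpt_iff_available (tentative_eq_none_of_ne hrej)).2 ho')

theorem isSerialDictatorshipAt_tentative {t : ℕ} {b : Fin n}
    (h : M.tentative (app t) b = app t b) :
    M.IsSerialDictatorshipAt (M.tentative (app t)) b :=
  ⟨M.available_tentative (app t) b, fun _ ho => h ▸ hrun.rank_app_le t ho⟩

theorem exists_card_filledAbove_of_rejected :
    ∀ t {b : Fin n}, M.tentative (app t) b ≠ app t b →
      ∃ S : Finset (Fin m), #S = t + 1 ∧ ∀ c ∈ S, M.FilledAbove (M.tentative (app t)) b c
  | 0, b, hrej => by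
    obtain ⟨c, -, hc⟩ := filledAbove_of_rejected hrej
    exact ⟨{c}, card_singleton c, by simpa using hc⟩
  | t + 1, b, hrej => by
    obtain ⟨c, happ, hc⟩ := filledAbove_of_rejected hrej
    obtain ⟨b', hb', hrej'⟩ := (hrun.2 t).exists_lt_rejected hrej
    obtain ⟨S, hS, hSfull⟩ := exists_card_filledAbove_of_rejected t hrej'
    have hfull : ∀ c' ∈ S, M.FilledAbove (M.tentative (app t)) b c' :=
      fun c' h => (hSfull c' h).mono hb'.le
    have hcS : c ∉ S := fun h => (hrun.2 t).not_filledAbove happ (hfull c h)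
    refine ⟨insert c S, by rw [card_insert_of_notMem hcS, hS], fun c' hc' => ?_⟩
    rcases mem_insert.1 hc' with rfl | h
    · exact hc
    · exact (hrun.2 t).filledAbove (hfull c' h)

/-- In the paper's notation: a student rejected in round `t + 1` has rank `b + 1 > Σ(t + 1)`. -/
theorem sum_le_of_rejected {κ : Fin m → ℕ} (σ : Equiv.Perm (Fin m)) (hmono : Monotone κ)
    (hκ : ∀ c, κ c = M.q (σ c)) {t k : ℕ} (hk : k ≤ t + 1) {b : Fin n}
    (hrej : M.tentative (app t) b ≠ app t b) :
    (∑ l : Fin m, if (l : ℕ) < k then κ l else 0) ≤ b := by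
  obtain ⟨S, hS, hfull⟩ := hrun.exists_card_filledAbove_of_rejected t hrej
  calc (∑ l : Fin m, if (l : ℕ) < k then κ l else 0)
      ≤ ∑ l ∈ S.map σ.symm.toEmbedding, κ l :=
        Fin.sum_ite_val_lt_le_sum_of_monotone hmono (by rwa [card_map, hS])
    _ = ∑ c ∈ S, M.q c := by simp [hκ]
    _ ≤ b := sum_q_le_of_filledAbove hfull

end Market.IsRun

theorem unconstrained_students_get_DA_outcome_general (n m : ℕ) (M : Market n m)
    (κ : Fin m → ℕ) (σ : Equiv.Perm (Fin m)) (hmono : Monotone κ)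
    (hκ : ∀ c, κ c = M.q (σ c))
    (T : ℕ) (i : Fin n)
    (hi : (i : ℕ) + 1 ≤ ∑ k : Fin m, if (k : ℕ) < T then κ k else 0)
    (app : ℕ → Fin n → Option (Fin m)) (hrun : M.IsRun app)
    (μDA : Fin n → Option (Fin m)) (hDA : M.Stable μDA) :
    (∀ t : ℕ,
        ((Finset.range t).filter fun s => M.tentative (app s) i ≠ app s i).card
          ≤ T - 1) ∧
      M.tentative (app (T - 1)) i = μDA i := by
  have never_rejected : ∀ s, T - 1 ≤ s → ∀ b ≤ i, M.tentative (app s) b = app s b := by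
    intro s hs b hb
    by_contra hrej
    have hsum := hrun.sum_le_of_rejected σ hmono hκ (k := T) (by omega) hrej
    rw [Fin.le_def] at hb
    omega
  refine ⟨fun t => ?_, ?_⟩
  · calc #{s ∈ range t | M.tentative (app s) i ≠ app s i}
        ≤ #(range (T - 1)) := card_le_card fun s hs => mem_range.2 <| by
          by_contra! hsT
          exact (mem_filter.1 hs).2 (never_rejected s hsT i le_rfl)
      _ = T - 1 := card_range _
  · exact M.eq_of_forall_le_isSerialDictatorshipAt fun b hb =>
      ⟨hrun.isSerialDictatorshipAt_tentative (never_rejected _ le_rfl b hb),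
        hDA.isSerialDictatorship b⟩

/-- let `κ` list the capacities in increasing order and
`Σ(T) = κ 0 + ⋯ + κ (T-1)`.  Any student whose priority rank (position `i + 1`)
is at most `Σ(T)` is rejected at most `T - 1` times during the straightforward
application process, and her TCDM outcome with round limit `T` equals her DA
outcome (the unique stable matching). -/
theorem unconstrained_students_get_DA_outcome (n m : ℕ) (M : Market n m)
    (κ : Fin m → ℕ) (σ : Equiv.Perm (Fin m)) (hmono : Monotone κ)
    (hκ : ∀ c, κ c = M.q (σ c))
    (T : ℕ) (hT : 1 ≤ T) (i : Fin n)
    (hi : (i : ℕ) + 1 ≤ ∑ k : Fin m, if (k : ℕ) < T then κ k else 0)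
    (app : ℕ → Fin n → Option (Fin m)) (hrun : M.IsRun app)
    (μDA : Fin n → Option (Fin m)) (hDA : M.Stable μDA) :
    (∀ t : ℕ,
        ((Finset.range t).filter fun s => M.tentative (app s) i ≠ app s i).card
          ≤ T - 1) ∧
      M.tentative (app (T - 1)) i = μDA i :=
  unconstrained_students_get_DA_outcome_general n m M κ σ hmono hκ T i hi app hrun μDA hDA
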